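/- Let m ≥ 2 be an integer and let v : ℝ^m ∖ {0} → ℝ^{m³} be the cubic Misawa–Nakauchi map with components v_{ijk}(x) = (1/√((m−1)(m+2)))( δ_{ij} x_k/r + δ_{jk} x_i/r + δ_{ik} x_j/r − (m+2) x_i x_j x_k / r³ ). Then for every x ∈ ℝ^m ∖ {0} and all indices i,j,k, the componentwise Euclidean bi-Laplacian satisfies Δ²v_{ijk}(x) = (15(m+1)(m−1)/r(x)⁴) v_{ijk}(x). -/

import Mathlib

/-!
Away from the origin, `v = c · P · r⁻³` with `c = 1/√((m-1)(m+2))` and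
`P(x) = S(x) |x|² - (m+2) xᵢ xⱼ x_k`, where `S(x) = δᵢⱼ x_k + δⱼ_k xᵢ + δᵢ_k xⱼ`.
The cubic `P` is harmonic: `Δ(S |x|²) = 2(m+2) S` and `Δ(xᵢ xⱼ x_k) = 2 S`.
For a harmonic polynomial `P` homogeneous of degree `n`, the product rule for `Δ` together with
Euler's identity `x · ∇P = n P` and `Δ rᵉ = e(e+m-2) r^(e-2)` gives
`Δ(P rᵉ) = e(2n+e+m-2) P r^(e-2)`. With `n = 3`, first `e = -3` and then `e = -5`,
`Δ²v = (-3)(m+1) · (-5)(m-1) · r⁻⁴ v`.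
-/

noncomputable section

open Real MeasureTheory

/-- Partial derivative of `f` in the `a`-th coordinate direction. -/
def pd {m : ℕ} (a : Fin m) (f : EuclideanSpace ℝ (Fin m) → ℝ)
    (x : EuclideanSpace ℝ (Fin m)) : ℝ :=
  fderiv ℝ f x (EuclideanSpace.single a 1)

/-- Euclidean Laplacian `Δf = Σ_a ∂²f/∂x_a²`. -/
def lap {m : ℕ} (f : EuclideanSpace ℝ (Fin m) → ℝ)
    (x : EuclideanSpace ℝ (Fin m)) : ℝ :=
  ∑ a : Fin m, pd a (pd a f) x

/-- Squared norm of the total derivative: `|∇w|² = Σ_{k,a} (∂_k w_a)²`. -/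
def gradSq {m : ℕ} {ι : Type*} [Fintype ι]
    (w : ι → EuclideanSpace ℝ (Fin m) → ℝ) (x : EuclideanSpace ℝ (Fin m)) : ℝ :=
  ∑ k : Fin m, ∑ a : ι, (pd k (w a) x) ^ 2

/-- The cubic Misawa–Nakauchi map
`v_{ijk}(x) = (1/√((m−1)(m+2)))(δ_{ij}x_k/r + δ_{jk}x_i/r + δ_{ik}x_j/r − (m+2)xᵢxⱼx_k/r³)`. -/
def vMN (m : ℕ) (i j k : Fin m) (x : EuclideanSpace ℝ (Fin m)) : ℝ :=
  (1 / Real.sqrt (((m : ℝ) - 1) * ((m : ℝ) + 2))) *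
    ((if i = j then (1 : ℝ) else 0) * x k / ‖x‖
      + (if j = k then (1 : ℝ) else 0) * x i / ‖x‖
      + (if i = k then (1 : ℝ) else 0) * x j / ‖x‖
      - ((m : ℝ) + 2) * x i * x j * x k / ‖x‖ ^ 3)

open Filter Topology

section Calculus

variable {m : ℕ} {f g : EuclideanSpace ℝ (Fin m) → ℝ} {x : EuclideanSpace ℝ (Fin m)}

lemma pd_congr (h : f =ᶠ[𝓝 x] g) (a : Fin m) : pd a f x = pd a g x := by
  rw [pd, pd, h.fderiv_eq]

lemma lap_congr (h : f =ᶠ[𝓝 x] g) : lap f x = lap g x :=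
  Finset.sum_congr rfl fun a _ =>
    pd_congr (h.eventuallyEq_nhds.mono fun _ hy => pd_congr hy a) a

lemma pd_const_mul (c : ℝ) (a : Fin m) : pd a (fun y => c * f y) x = c * pd a f x := by
  simp only [pd]
  rw [show (fun y => c * f y) = c • f from rfl, fderiv_const_smul_field]
  rfl

lemma lap_const_mul (c : ℝ) : lap (fun y => c * f y) x = c * lap f x := by
  simp only [lap, Finset.mul_sum]
  refine Finset.sum_congr rfl fun a _ => ?_
  rw [← pd_const_mul]
  congr 1
  funext y
  exact pd_const_mul c a

lemma pd_sub (hf : DifferentiableAt ℝ f x) (hg : DifferentiableAt ℝ g x) (a : Fin m) :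
    pd a (fun y => f y - g y) x = pd a f x - pd a g x := by
  simp [pd, fderiv_fun_sub hf hg]

lemma pd_add (hf : DifferentiableAt ℝ f x) (hg : DifferentiableAt ℝ g x) (a : Fin m) :
    pd a (fun y => f y + g y) x = pd a f x + pd a g x := by
  simp [pd, fderiv_fun_add hf hg]

lemma pd_mul (hf : DifferentiableAt ℝ f x) (hg : DifferentiableAt ℝ g x) (a : Fin m) :
    pd a (fun y => f y * g y) x = pd a f x * g x + f x * pd a g x := by
  simp only [pd, fderiv_fun_mul hf hg, add_apply, smul_apply, smul_eq_mul]
  ring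

lemma ContDiffAt.differentiableAt_pd (hf : ContDiffAt ℝ 2 f x) (a : Fin m) :
    DifferentiableAt ℝ (pd a f) x :=
  ((hf.fderiv_right (m := 1) (by norm_num)).differentiableAt one_ne_zero).clm_apply
    (differentiableAt_const _)

lemma ContDiffAt.eventually_differentiableAt (hf : ContDiffAt ℝ 2 f x) :
    ∀ᶠ y in 𝓝 x, DifferentiableAt ℝ f y :=
  (hf.eventually (by simp)).mono fun _ hy => hy.differentiableAt two_ne_zero

lemma lap_sub (hf : ContDiffAt ℝ 2 f x) (hg : ContDiffAt ℝ 2 g x) :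
    lap (fun y => f y - g y) x = lap f x - lap g x := by
  simp only [lap, ← Finset.sum_sub_distrib]
  refine Finset.sum_congr rfl fun a _ => ?_
  have hpd : pd a (fun y => f y - g y) =ᶠ[𝓝 x] fun y => pd a f y - pd a g y := by
    filter_upwards [hf.eventually_differentiableAt, hg.eventually_differentiableAt]
      with y hfy hgy using pd_sub hfy hgy a
  rw [pd_congr hpd, pd_sub (hf.differentiableAt_pd a) (hg.differentiableAt_pd a)]

lemma lap_mul (hf : ContDiffAt ℝ 2 f x) (hg : ContDiffAt ℝ 2 g x) :
    lap (fun y => f y * g y) x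
      = lap f x * g x + 2 * ∑ a, pd a f x * pd a g x + f x * lap g x := by
  simp only [lap, Finset.mul_sum, Finset.sum_mul, ← Finset.sum_add_distrib]
  refine Finset.sum_congr rfl fun a _ => ?_
  have hpd : pd a (fun y => f y * g y) =ᶠ[𝓝 x] fun y => pd a f y * g y + f y * pd a g y := by
    filter_upwards [hf.eventually_differentiableAt, hg.eventually_differentiableAt]
      with y hfy hgy using pd_mul hfy hgy a
  have hf' := hf.differentiableAt two_ne_zero
  have hg' := hg.differentiableAt two_ne_zero
  rw [pd_congr hpd,
    pd_add ((hf.differentiableAt_pd a).fun_mul hg') (hf'.fun_mul (hg.differentiableAt_pd a)),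
    pd_mul (hf.differentiableAt_pd a) hg', pd_mul hf' (hg.differentiableAt_pd a)]
  ring

lemma clm_apply_eq_sum (L : EuclideanSpace ℝ (Fin m) →L[ℝ] ℝ) (x : EuclideanSpace ℝ (Fin m)) :
    L x = ∑ a, x a * L (EuclideanSpace.single a 1) := by
  conv_lhs => rw [← (EuclideanSpace.basisFun (Fin m) ℝ).sum_repr x]
  simp

end Calculus

lemma fderiv_apply_self_of_homogeneous {E : Type*} [NormedAddCommGroup E] [NormedSpace ℝ E]
    {f : E → ℝ} {x : E} (n : ℕ) (hf : DifferentiableAt ℝ f x)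
    (hhom : ∀ (t : ℝ) (y : E), f (t • y) = t ^ n * f y) :
    fderiv ℝ f x x = n * f x := by
  have hline : HasDerivAt (fun t : ℝ => t • x) x 1 := by
    simpa using (hasDerivAt_id (1 : ℝ)).smul_const x
  have hray : HasDerivAt (fun t : ℝ => f (t • x)) (fderiv ℝ f ((1 : ℝ) • x) x) 1 :=
    (one_smul ℝ x ▸ hf).hasFDerivAt.comp_hasDerivAt (1 : ℝ) hline
  rw [one_smul] at hray
  have hpow : HasDerivAt (fun t : ℝ => t ^ n * f x) (n * f x) 1 := by
    simpa using (hasDerivAt_pow n (1 : ℝ)).mul_const (f x)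
  exact hray.unique (by simpa only [hhom] using hpow)

lemma hasFDerivAt_norm {F : Type*} [NormedAddCommGroup F] [InnerProductSpace ℝ F] {x : F}
    (hx : x ≠ 0) : HasFDerivAt (‖·‖) (‖x‖⁻¹ • innerSL ℝ x) x := by
  have h := (hasStrictFDerivAt_norm_sq x).hasFDerivAt.sqrt (by positivity)
  simp only [Real.sqrt_sq (norm_nonneg _)] at h
  convert h using 1
  ext v
  simp [field]

section Radial

variable {m : ℕ} {x : EuclideanSpace ℝ (Fin m)}

lemma pd_clm (L : EuclideanSpace ℝ (Fin m) →L[ℝ] ℝ) (a : Fin m) :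
    pd a L x = L (EuclideanSpace.single a 1) := by
  simp [pd]

lemma lap_clm (L : EuclideanSpace ℝ (Fin m) →L[ℝ] ℝ) : lap L x = 0 := by
  have hpd (a : Fin m) : pd a L = fun _ => L (EuclideanSpace.single a 1) :=
    funext fun _ => pd_clm L a
  simp [lap, hpd, pd]

lemma pd_coord (a b : Fin m) : pd a (fun y : EuclideanSpace ℝ (Fin m) => y b) x
    = if b = a then 1 else 0 := by
  simpa [PiLp.single_apply] using pd_clm (x := x) (EuclideanSpace.proj b) a

lemma pd_norm_sq (a : Fin m) : pd a (fun y : EuclideanSpace ℝ (Fin m) => ‖y‖ ^ 2) x = 2 * x a := by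
  simp [pd, fderiv_norm_sq_apply, EuclideanSpace.inner_single_right]

lemma lap_norm_sq : lap (fun y : EuclideanSpace ℝ (Fin m) => ‖y‖ ^ 2) x = 2 * m := by
  have hpd (a : Fin m) : pd a (fun y : EuclideanSpace ℝ (Fin m) => ‖y‖ ^ 2) = fun y => 2 * y a :=
    funext fun _ => pd_norm_sq a
  simp [lap, hpd, pd_const_mul, pd_coord, mul_comm]

lemma contDiffAt_zpow_norm (hx : x ≠ 0) (e : ℤ) {n : WithTop ℕ∞} :
    ContDiffAt ℝ n (fun y : EuclideanSpace ℝ (Fin m) => ‖y‖ ^ e) x :=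
  match e with
  | .ofNat k => by simpa using (contDiffAt_norm ℝ hx).pow k
  | .negSucc k => by
    simp only [zpow_negSucc]
    exact ((contDiffAt_norm ℝ hx).pow (k + 1)).inv (pow_ne_zero _ (norm_ne_zero_iff.mpr hx))

lemma pd_zpow_norm (hx : x ≠ 0) (e : ℤ) (a : Fin m) :
    pd a (fun y : EuclideanSpace ℝ (Fin m) => ‖y‖ ^ e) x = e * x a * ‖x‖ ^ (e - 2) := by
  have hr : ‖x‖ ≠ 0 := norm_ne_zero_iff.mpr hx
  have h : HasFDerivAt (fun y : EuclideanSpace ℝ (Fin m) => ‖y‖ ^ e)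
      ((e * ‖x‖ ^ (e - 1)) • ‖x‖⁻¹ • innerSL ℝ x) x :=
    (hasDerivAt_zpow e ‖x‖ (Or.inl hr)).comp_hasFDerivAt x (hasFDerivAt_norm hx)
  rw [pd, h.fderiv]
  simp only [zpow_sub₀ hr, zpow_one, smul_apply, innerSL_apply_apply,
    EuclideanSpace.inner_single_right, one_mul, smul_eq_mul, RCLike.conj_to_real]
  field_simp

lemma lap_zpow_norm (hx : x ≠ 0) (e : ℤ) :
    lap (fun y : EuclideanSpace ℝ (Fin m) => ‖y‖ ^ e) x = e * (e + m - 2) * ‖x‖ ^ (e - 2) := by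
  have hr : ‖x‖ ≠ 0 := norm_ne_zero_iff.mpr hx
  have hpd (a : Fin m) : pd a (fun y : EuclideanSpace ℝ (Fin m) => ‖y‖ ^ e)
      =ᶠ[𝓝 x] fun y => e * (y a * ‖y‖ ^ (e - 2)) := by
    filter_upwards [eventually_ne_nhds hx] with y hy
    rw [pd_zpow_norm hy, mul_assoc]
  have hdiff : DifferentiableAt ℝ (fun y : EuclideanSpace ℝ (Fin m) => ‖y‖ ^ (e - 2)) x :=
    (contDiffAt_zpow_norm hx _ (n := 1)).differentiableAt one_ne_zero
  have hcoord (a : Fin m) : DifferentiableAt ℝ (fun y : EuclideanSpace ℝ (Fin m) => y a) x := by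
    fun_prop
  simp only [lap, pd_congr (hpd _), pd_const_mul, pd_mul (hcoord _) hdiff, pd_coord,
    pd_zpow_norm hx, if_true]
  have hsq : ∑ a, x a * x a = ‖x‖ ^ 2 := by
    simp [EuclideanSpace.real_norm_sq_eq, ← sq]
  have hpow : ‖x‖ ^ (e - 2 - 2) * ‖x‖ ^ 2 = ‖x‖ ^ (e - 2) := by
    rw [← zpow_natCast, ← zpow_add₀ hr]; norm_num
  have hterm (a : Fin m) : e * (1 * ‖x‖ ^ (e - 2) + x a * (↑(e - 2) * x a * ‖x‖ ^ (e - 2 - 2)))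
      = e * ‖x‖ ^ (e - 2) + e * (e - 2) * ‖x‖ ^ (e - 2 - 2) * (x a * x a) := by
    push_cast; ring
  rw [Finset.sum_congr rfl fun a _ => hterm a, Finset.sum_add_distrib, Finset.sum_const,
    ← Finset.mul_sum, hsq, ← hpow]
  simp only [Finset.card_univ, Fintype.card_fin, nsmul_eq_mul]
  ring

end Radial

lemma lap_mul_zpow_norm_of_harmonic {m n : ℕ} {f : EuclideanSpace ℝ (Fin m) → ℝ}
    {x : EuclideanSpace ℝ (Fin m)} (hx : x ≠ 0) (hf : ContDiffAt ℝ 2 f x)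
    (hhom : ∀ (t : ℝ) (y : EuclideanSpace ℝ (Fin m)), f (t • y) = t ^ n * f y)
    (hharm : lap f x = 0) (e : ℤ) :
    lap (fun y => f y * ‖y‖ ^ e) x = e * (2 * n + e + m - 2) * (f x * ‖x‖ ^ (e - 2)) := by
  have heuler : ∑ a, x a * pd a f x = n * f x := by
    rw [← fderiv_apply_self_of_homogeneous n (hf.differentiableAt two_ne_zero) hhom,
      clm_apply_eq_sum (fderiv ℝ f x)]
    rfl
  have hcross : ∑ a, pd a f x * pd a (fun y => ‖y‖ ^ e) x = e * ‖x‖ ^ (e - 2) * (n * f x) := by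
    simp only [pd_zpow_norm hx, ← heuler, Finset.mul_sum]
    exact Finset.sum_congr rfl fun a _ => by ring
  rw [lap_mul hf (contDiffAt_zpow_norm hx e), hharm, lap_zpow_norm hx, hcross]
  ring

section MisawaNakauchi

variable {m : ℕ} (i j k : Fin m)

def kroneckerSym : EuclideanSpace ℝ (Fin m) →L[ℝ] ℝ :=
  (if i = j then (1 : ℝ) else 0) • EuclideanSpace.proj k
    + (if j = k then (1 : ℝ) else 0) • EuclideanSpace.proj i
    + (if i = k then (1 : ℝ) else 0) • EuclideanSpace.proj j

lemma kroneckerSym_apply (y : EuclideanSpace ℝ (Fin m)) :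
    kroneckerSym i j k y = (if i = j then (1 : ℝ) else 0) * y k
      + (if j = k then (1 : ℝ) else 0) * y i + (if i = k then (1 : ℝ) else 0) * y j := by
  simp only [kroneckerSym]
  split_ifs <;> simp

def mnCubic (y : EuclideanSpace ℝ (Fin m)) : ℝ :=
  kroneckerSym i j k y * ‖y‖ ^ 2 - ((m : ℝ) + 2) * (y i * y j * y k)

variable {x : EuclideanSpace ℝ (Fin m)}

lemma lap_clm_mul_norm_sq (L : EuclideanSpace ℝ (Fin m) →L[ℝ] ℝ) :
    lap (fun y => L y * ‖y‖ ^ 2) x = 2 * (m + 2) * L x := by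
  have hcross : ∑ a, pd a L x * pd a (fun y => ‖y‖ ^ 2) x = 2 * L x := by
    simp only [pd_clm, pd_norm_sq, clm_apply_eq_sum L x, Finset.mul_sum]
    exact Finset.sum_congr rfl fun a _ => by ring
  rw [lap_mul L.contDiff.contDiffAt (contDiff_norm_sq ℝ).contDiffAt, lap_clm, lap_norm_sq, hcross]
  ring

lemma lap_coord_mul_coord_mul_coord :
    lap (fun y : EuclideanSpace ℝ (Fin m) => y i * y j * y k) x = 2 * kroneckerSym i j k x := by
  have hcoord (b : Fin m) : ContDiffAt ℝ 2 (fun y : EuclideanSpace ℝ (Fin m) => y b) x := by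
    fun_prop
  have hlap_coord (b : Fin m) : lap (fun y : EuclideanSpace ℝ (Fin m) => y b) x = 0 :=
    lap_clm (EuclideanSpace.proj b)
  have hpd (a : Fin m) : pd a (fun y : EuclideanSpace ℝ (Fin m) => y i * y j) x
      = (if i = a then 1 else 0) * x j + x i * (if j = a then 1 else 0) := by
    rw [pd_mul ((hcoord i).differentiableAt two_ne_zero) ((hcoord j).differentiableAt two_ne_zero),
      pd_coord, pd_coord]
  have hlap : lap (fun y : EuclideanSpace ℝ (Fin m) => y i * y j) x = 2 * if i = j then 1 else 0 := by
    rw [lap_mul (hcoord i) (hcoord j), hlap_coord, hlap_coord]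
    simp [pd_coord]
  rw [lap_mul ((hcoord i).mul (hcoord j)) (hcoord k), hlap, hlap_coord]
  simp only [hpd, pd_coord, kroneckerSym_apply, mul_ite, ite_mul, mul_one, mul_zero, zero_mul,
    one_mul, Finset.sum_ite_eq, Finset.mem_univ, if_true, add_zero]
  split_ifs <;> ring

lemma contDiff_mnCubic : ContDiff ℝ 2 (mnCubic i j k) := by
  have hcoords : ContDiff ℝ 2 fun y : EuclideanSpace ℝ (Fin m) => y i * y j * y k := by fun_prop
  exact ((kroneckerSym i j k).contDiff.mul (contDiff_norm_sq ℝ)).sub (contDiff_const.mul hcoords)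

lemma mnCubic_smul (t : ℝ) (y : EuclideanSpace ℝ (Fin m)) :
    mnCubic i j k (t • y) = t ^ 3 * mnCubic i j k y := by
  simp only [mnCubic, map_smul, norm_smul, PiLp.smul_apply, smul_eq_mul, mul_pow,
    Real.norm_eq_abs, sq_abs]
  ring

lemma lap_mnCubic : lap (mnCubic i j k) x = 0 := by
  have hcoords : ContDiffAt ℝ 2 (fun y : EuclideanSpace ℝ (Fin m) => y i * y j * y k) x := by
    fun_prop
  change lap (fun y => kroneckerSym i j k y * ‖y‖ ^ 2 - ((m : ℝ) + 2) * (y i * y j * y k)) x = 0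
  rw [lap_sub ((kroneckerSym i j k).contDiff.mul (contDiff_norm_sq ℝ)).contDiffAt
      (contDiffAt_const.mul hcoords), lap_clm_mul_norm_sq,
    lap_const_mul (f := fun y => y i * y j * y k), lap_coord_mul_coord_mul_coord]
  ring

lemma lap_mnCubic_mul_zpow_norm (hx : x ≠ 0) (e : ℤ) :
    lap (fun y => mnCubic i j k y * ‖y‖ ^ e) x
      = e * (e + m + 4) * (mnCubic i j k x * ‖x‖ ^ (e - 2)) := by
  rw [lap_mul_zpow_norm_of_harmonic hx (contDiff_mnCubic i j k).contDiffAt (mnCubic_smul i j k)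
    (lap_mnCubic i j k)]
  push_cast
  ring

lemma vMN_eq_mnCubic_mul_zpow_norm (hx : x ≠ 0) :
    vMN m i j k x = 1 / √(((m : ℝ) - 1) * ((m : ℝ) + 2)) * (mnCubic i j k x * ‖x‖ ^ (-3 : ℤ)) := by
  have hr : ‖x‖ ≠ 0 := norm_ne_zero_iff.mpr hx
  simp only [vMN, mnCubic, kroneckerSym_apply, zpow_neg, zpow_ofNat]
  field_simp

end MisawaNakauchi

theorem stmt14_general (m : ℕ) (x : EuclideanSpace ℝ (Fin m)) (hx : x ≠ 0)
    (i j k : Fin m) :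
    lap (lap (vMN m i j k)) x
      = (15 * ((m : ℝ) + 1) * ((m : ℝ) - 1) / ‖x‖ ^ 4) * vMN m i j k x := by
  set c : ℝ := 1 / √(((m : ℝ) - 1) * ((m : ℝ) + 2))
  have hlap (y : EuclideanSpace ℝ (Fin m)) (hy : y ≠ 0) :
      lap (vMN m i j k) y = c * (-3 * (m + 1)) * (mnCubic i j k y * ‖y‖ ^ (-5 : ℤ)) := by
    rw [lap_congr ((eventually_ne_nhds hy).mono fun _ => vMN_eq_mnCubic_mul_zpow_norm i j k),
      lap_const_mul, lap_mnCubic_mul_zpow_norm i j k hy]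
    norm_num
    ring
  have hpow : ‖x‖ ^ (-5 - 2 : ℤ) = ‖x‖ ^ (-3 : ℤ) / ‖x‖ ^ 4 := by
    rw [div_eq_mul_inv, ← zpow_natCast, ← zpow_neg, ← zpow_add₀ (norm_ne_zero_iff.mpr hx)]
    norm_num
  rw [lap_congr ((eventually_ne_nhds hx).mono hlap), lap_const_mul,
    lap_mnCubic_mul_zpow_norm i j k hx, vMN_eq_mnCubic_mul_zpow_norm i j k hx, hpow]
  push_cast
  ring

theorem stmt14 (m : ℕ) (hm : 2 ≤ m) (x : EuclideanSpace ℝ (Fin m)) (hx : x ≠ 0)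
    (i j k : Fin m) :
    lap (lap (vMN m i j k)) x
      = (15 * ((m : ℝ) + 1) * ((m : ℝ) - 1) / ‖x‖ ^ 4) * vMN m i j k x :=
  stmt14_general m x hx i j k
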